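/- Let G be a finite simple graph and vw an edge of G. Then vw is exposed if and only if w is a non-isolated simplicial vertex of the induced subgraph of G on N_G(v) (i.e., w has at least one neighbor in N_G(v), and the neighbors of w within the induced subgraph on N_G(v) together with w form a clique). -/

import Mathlib

variable {V : Type*}

/-- A maximal clique of `G`: a clique not properly contained in any other clique. -/
def IsMaxClique (G : SimpleGraph V) (s : Set V) : Prop :=
  G.IsClique s ∧ ∀ t : Set V, G.IsClique t → s ⊆ t → t = s

/-- `xy` is a facet edge of `G` if it is an edge and `{x, y}` is a maximal clique. -/
def IsFacetEdge (G : SimpleGraph V) (x y : V) : Prop :=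
  G.Adj x y ∧ IsMaxClique G {x, y}

/-- `xy` is an exposed edge of `G` if it is an edge contained in a unique maximal
clique and it is not a facet edge. -/
def IsExposedEdge (G : SimpleGraph V) (x y : V) : Prop :=
  G.Adj x y ∧ (∃! s : Set V, IsMaxClique G s ∧ x ∈ s ∧ y ∈ s) ∧ ¬ IsFacetEdge G x y

/-- A graph is chordal if every cycle of length at least four has a chord, i.e. an
edge of the graph joining two vertices of the cycle which is not an edge of the cycle. -/
def IsChordal (G : SimpleGraph V) : Prop :=
  ∀ ⦃v : V⦄ (w : G.Walk v v), w.IsCycle → 4 ≤ w.length →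
    ∃ a b, a ∈ w.support ∧ b ∈ w.support ∧ G.Adj a b ∧ s(a, b) ∉ w.edges

/-- `H` is obtained from `G` through an erasure: deletion of a single exposed edge. -/
def Erasure (G H : SimpleGraph V) : Prop :=
  ∃ x y : V, IsExposedEdge G x y ∧ H = G.deleteEdges {s(x, y)}

/-!
Every clique through `v` and `w` lies in `C = {v, w} ∪ (N(v) ∩ N(w))`. So if `C` is a clique, it
is the only maximal clique through `vw`; conversely, every common neighbour `u` lies in some
maximal clique through `v, w, u` (Zorn), which must be the unique one, so `C` is then a clique.
Moreover `{v, w}` is maximal exactly when `N(v) ∩ N(w)` is empty. Since `v` is adjacent to all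
of `C`, `C` is a clique iff `{w} ∪ (N(v) ∩ N(w))` is.
-/

open SimpleGraph Set

namespace SimpleGraph

variable {G : SimpleGraph V} {s : Set V} {u v w : V}

lemma IsClique.exists_isMaxClique_superset (hs : G.IsClique s) :
    ∃ t, IsMaxClique G t ∧ s ⊆ t := by
  obtain ⟨t, hst, ht⟩ := zorn_subset_nonempty {t | G.IsClique t}
    (fun c hc hchain _ ↦ ⟨⋃₀ c, (isClique_sUnion hchain.directedOn).2 hc,
      fun _ ↦ subset_sUnion_of_mem⟩) s hs
  exact ⟨t, ⟨ht.prop, fun _ ht' hsub ↦ ht.eq_of_superset ht' hsub⟩, hst⟩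

lemma subset_insert_insert_commonNeighbors (hs : G.IsClique s) (hv : v ∈ s)
    (hw : w ∈ s) : s ⊆ insert v (insert w (G.commonNeighbors v w)) := by
  intro x hx
  by_cases hxv : x = v
  · exact hxv ▸ mem_insert _ _
  by_cases hxw : x = w
  · exact hxw ▸ mem_insert_of_mem _ (mem_insert _ _)
  exact mem_insert_of_mem _ <| mem_insert_of_mem _
    ⟨hs hv hx (Ne.symm hxv), hs hw hx (Ne.symm hxw)⟩

lemma isClique_triple_of_mem_commonNeighbors (h : G.Adj v w) (hu : u ∈ G.commonNeighbors v w) :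
    G.IsClique {u, v, w} :=
  (isClique_pair.2 fun _ ↦ h).insert <| by
    rintro b (rfl | rfl) -
    exacts [hu.1.symm, hu.2.symm]

lemma isClique_insert_insert_commonNeighbors_iff (h : G.Adj v w) :
    G.IsClique (insert v (insert w (G.commonNeighbors v w))) ↔
      G.IsClique (insert w (G.commonNeighbors v w)) := by
  rw [isClique_insert, and_iff_left_iff_imp]
  rintro - b (rfl | hb) -
  exacts [h, hb.1]

lemma isMaxClique_insert_insert_commonNeighbors
    (hC : G.IsClique (insert v (insert w (G.commonNeighbors v w)))) :
    IsMaxClique G (insert v (insert w (G.commonNeighbors v w))) :=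
  ⟨hC, fun _ ht hsub ↦ (subset_insert_insert_commonNeighbors ht (hsub (mem_insert _ _))
    (hsub (mem_insert_of_mem _ (mem_insert _ _)))).antisymm hsub⟩

lemma existsUnique_isMaxClique_iff (h : G.Adj v w) :
    (∃! s, IsMaxClique G s ∧ v ∈ s ∧ w ∈ s) ↔
      G.IsClique (insert v (insert w (G.commonNeighbors v w))) := by
  constructor
  · rintro ⟨S, ⟨hS, hvS, hwS⟩, huniq⟩
    refine hS.1.subset (insert_subset hvS (insert_subset hwS fun u hu ↦ ?_))
    obtain ⟨T, hT, hsub⟩ :=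
      (isClique_triple_of_mem_commonNeighbors h hu).exists_isMaxClique_superset
    obtain rfl : T = S := huniq T ⟨hT, hsub (by simp), hsub (by simp)⟩
    exact hsub (by simp)
  · intro hC
    refine ⟨_, ⟨isMaxClique_insert_insert_commonNeighbors hC, mem_insert _ _,
      mem_insert_of_mem _ (mem_insert _ _)⟩, fun S ⟨hS, hvS, hwS⟩ ↦ ?_⟩
    exact (hS.2 _ hC (subset_insert_insert_commonNeighbors hS.1 hvS hwS)).symm

lemma isFacetEdge_iff_commonNeighbors_eq_empty (h : G.Adj v w) :
    IsFacetEdge G v w ↔ G.commonNeighbors v w = ∅ := by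
  constructor
  · rintro ⟨-, -, hmax⟩
    refine eq_empty_of_forall_notMem fun u hu ↦ ?_
    have hu' : u ∈ ({v, w} : Set V) := by
      rw [← hmax {u, v, w} (isClique_triple_of_mem_commonNeighbors h hu) (subset_insert _ _)]
      exact mem_insert _ _
    rcases hu' with rfl | rfl
    exacts [G.irrefl hu.1, G.irrefl hu.2]
  · intro hcn
    have hC : G.IsClique (insert v (insert w (G.commonNeighbors v w))) := by
      rw [hcn, insert_empty_eq]
      exact isClique_pair.2 fun _ ↦ h
    have hmax := isMaxClique_insert_insert_commonNeighbors hC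
    rw [hcn, insert_empty_eq] at hmax
    exact ⟨h, hmax⟩

end SimpleGraph

theorem isExposedEdge_iff_simplicial_in_link_general (G : SimpleGraph V)
    (v w : V) (hvw : G.Adj v w) :
    IsExposedEdge G v w ↔
      ((∃ u ∈ G.neighborSet v, G.Adj w u) ∧
        G.IsClique (insert w (G.neighborSet v ∩ G.neighborSet w))) := by
  rw [IsExposedEdge, existsUnique_isMaxClique_iff hvw,
    isClique_insert_insert_commonNeighbors_iff hvw,
    isFacetEdge_iff_commonNeighbors_eq_empty hvw, ← not_nonempty_iff_eq_empty, not_not]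
  exact ⟨fun ⟨_, hC, hne⟩ ↦ ⟨hne, hC⟩, fun ⟨hne, hC⟩ ↦ ⟨hvw, hC, hne⟩⟩

/-- An edge `vw` is exposed if and only if `w` is a non-isolated simplicial vertex of
the induced subgraph of `G` on `N_G(v)`: i.e. `w` has a neighbor in `N_G(v)`, and the
neighbors of `w` lying in `N_G(v)` together with `w` itself form a clique. -/
theorem isExposedEdge_iff_simplicial_in_link [Fintype V] (G : SimpleGraph V)
    (v w : V) (hvw : G.Adj v w) :
    IsExposedEdge G v w ↔
      ((∃ u ∈ G.neighborSet v, G.Adj w u) ∧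
        G.IsClique (insert w (G.neighborSet v ∩ G.neighborSet w))) :=
  isExposedEdge_iff_simplicial_in_link_general G v w hvw
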